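/- arXiv:1907.08121 — 8 statements merged into one kernel-verified Lean document; each statement's English description precedes it below -/
import Mathlib

section
/- There do not exist four pairwise orthogonal circles in the Euclidean plane. That is, there are no four circles such that every pair of them intersects orthogonally. -/
/-!
If one centre is moved to the origin, orthogonality makes the Gram matrix of the remaining centres
equal to `r₀² J + diag rᵢ²`, which is positive definite. Hence the centres of pairwise orthogonal
spheres with nonzero radii are affinely independent, and at most three of them fit in the plane.
-/

open RealInnerProductSpace Finset

section

variable {V : Type*} [NormedAddCommGroup V] [InnerProductSpace ℝ V] {ι : Type*}

theorem norm_sum_smul_sq_of_inner_eq {v : ι → V} {a : ℝ} {b : ι → ℝ}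
    (h_ne : Pairwise fun i j => ⟪v i, v j⟫ = a) (h_self : ∀ i, ⟪v i, v i⟫ = a + b i)
    (s : Finset ι) (g : ι → ℝ) :
    ‖∑ i ∈ s, g i • v i‖ ^ 2 = a * (∑ i ∈ s, g i) ^ 2 + ∑ i ∈ s, g i ^ 2 * b i := by
  classical
  have h_inner : ∀ i j, ⟪v i, v j⟫ = a + if i = j then b i else 0 := by
    intro i j
    by_cases hij : i = j
    · rw [if_pos hij, ← hij, h_self]
    · simp [h_ne hij, hij]
  rw [← real_inner_self_eq_norm_sq, sum_inner, sq, sum_mul_sum, mul_sum, ← sum_add_distrib]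
  refine sum_congr rfl fun i hi => ?_
  simp only [inner_sum, real_inner_smul_left, real_inner_smul_right, h_inner, mul_add,
    mul_ite, mul_zero, sum_add_distrib, sum_ite_eq, if_pos hi, mul_sum]
  congr 1
  · exact sum_congr rfl fun j _ => by ring
  · ring

theorem linearIndependent_of_inner_eq {v : ι → V} {a : ℝ} {b : ι → ℝ} (ha : 0 ≤ a)
    (hb : ∀ i, 0 < b i) (h_ne : Pairwise fun i j => ⟪v i, v j⟫ = a)
    (h_self : ∀ i, ⟪v i, v i⟫ = a + b i) : LinearIndependent ℝ v := by
  refine linearIndependent_iff'.2 fun s g hg i hi => ?_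
  have h_zero : a * (∑ i ∈ s, g i) ^ 2 + ∑ i ∈ s, g i ^ 2 * b i = 0 := by
    rw [← norm_sum_smul_sq_of_inner_eq h_ne h_self, hg, norm_zero, sq, zero_mul]
  have h_terms : ∀ j ∈ s, 0 ≤ g j ^ 2 * b j := fun j _ => by have := hb j; positivity
  have h_sum : ∑ j ∈ s, g j ^ 2 * b j = 0 := by
    have := sum_nonneg h_terms
    linarith [mul_nonneg ha (sq_nonneg (∑ i ∈ s, g i))]
  have := (sum_eq_zero_iff_of_nonneg h_terms).1 h_sum i hi
  simpa [(hb i).ne'] using this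

end

namespace EuclideanGeometry.Sphere

def IsOrthogonal {P : Type*} [MetricSpace P] (s₁ s₂ : Sphere P) : Prop :=
  s₁.radius ^ 2 + s₂.radius ^ 2 = dist s₁.center s₂.center ^ 2

section

variable {V P : Type*} [NormedAddCommGroup V] [MetricSpace P] [NormedAddTorsor V P]

theorem IsOrthogonal.norm_center_vsub_center_sq {s₁ s₂ : Sphere P} (h : s₁.IsOrthogonal s₂) :
    ‖s₁.center -ᵥ s₂.center‖ ^ 2 = s₁.radius ^ 2 + s₂.radius ^ 2 := by
  rw [← dist_eq_norm_vsub V, h]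

variable [InnerProductSpace ℝ V]

theorem inner_center_vsub_center_of_isOrthogonal {s s₁ s₂ : Sphere P} (h₁ : s₁.IsOrthogonal s)
    (h₂ : s₂.IsOrthogonal s) (h₁₂ : s₁.IsOrthogonal s₂) :
    ⟪s₁.center -ᵥ s.center, s₂.center -ᵥ s.center⟫ = s.radius ^ 2 := by
  have h := norm_sub_sq_real (s₁.center -ᵥ s.center) (s₂.center -ᵥ s.center)
  rw [vsub_sub_vsub_cancel_right, h₁.norm_center_vsub_center_sq,
    h₂.norm_center_vsub_center_sq, h₁₂.norm_center_vsub_center_sq] at h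
  linarith

variable {ι : Type*} {s : ι → Sphere P}

theorem affineIndependent_center_of_pairwise_isOrthogonal
    (h : Pairwise fun i j => (s i).IsOrthogonal (s j)) (hr : ∀ i, (s i).radius ≠ 0) :
    AffineIndependent ℝ fun i => (s i).center := by
  rcases isEmpty_or_nonempty ι with hι | ⟨⟨k⟩⟩
  · exact affineIndependent_of_subsingleton ℝ _
  refine (affineIndependent_iff_linearIndependent_vsub ℝ _ k).2 <|
    linearIndependent_of_inner_eq (b := fun i => (s i).radius ^ 2) (sq_nonneg (s k).radius)
      (fun i => ?_) ?_ ?_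
  · have := hr i
    positivity
  · rintro ⟨i, hi⟩ ⟨j, hj⟩ hij
    exact inner_center_vsub_center_of_isOrthogonal (h hi) (h hj) (h (Subtype.coe_ne_coe.2 hij))
  · rintro ⟨i, hi⟩
    rw [real_inner_self_eq_norm_sq, (h hi).norm_center_vsub_center_sq, add_comm]

theorem card_le_finrank_add_one_of_pairwise_isOrthogonal [Fintype ι] [FiniteDimensional ℝ V]
    (h : Pairwise fun i j => (s i).IsOrthogonal (s j)) (hr : ∀ i, (s i).radius ≠ 0) :
    Fintype.card ι ≤ Module.finrank ℝ V + 1 :=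
  (affineIndependent_center_of_pairwise_isOrthogonal h hr).card_le_finrank_succ.trans <|
    Nat.add_le_add_right (Submodule.finrank_le _) 1

end

end EuclideanGeometry.Sphere

/-- There do not exist four pairwise orthogonal circles in the plane. -/
theorem no_four_pairwise_orthogonal_circles :
    ¬ ∃ (c : Fin 4 → EuclideanSpace ℝ (Fin 2)) (r : Fin 4 → ℝ),
      (∀ i, 0 < r i) ∧
      (∀ i j, i ≠ j → r i ^ 2 + r j ^ 2 = dist (c i) (c j) ^ 2) := by
  rintro ⟨c, r, hr, horth⟩
  have h_card := EuclideanGeometry.Sphere.card_le_finrank_add_one_of_pairwise_isOrthogonal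
    (s := fun i => ⟨c i, r i⟩) horth fun i => (hr i).ne'
  rw [Fintype.card_fin, finrank_euclideanSpace_fin] at h_card
  omega
end

section
/- There do not exist four circles α, β, γ, δ in the Euclidean plane such that α is orthogonal to γ and δ, β is orthogonal to γ and δ, but α and β are disjoint and γ and δ are disjoint. (Orthogonal circle intersection graphs contain no induced C₄.) -/
open Metric Real

private lemma dist_sq_coord (x y : EuclideanSpace ℝ (Fin 2)) :
    dist x y ^ 2 = (x 0 - y 0) ^ 2 + (x 1 - y 1) ^ 2 := by
  rw [EuclideanSpace.dist_eq, Real.sq_sqrt (by positivity)]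
  simp [Fin.sum_univ_two, Real.dist_eq, sq_abs]

private lemma sq_eq_of_nonneg {a b : ℝ} (ha : 0 ≤ a) (hb : 0 ≤ b) (h : a ^ 2 = b ^ 2) :
    a = b := by
  have h0 : (a - b) * (a + b) = 0 := by linear_combination h
  rcases mul_eq_zero.mp h0 with h' | h'
  · linarith
  · linarith

/-- If two circles (positive radii) in the plane are disjoint, then
`(D² - (r₁+r₂)²) * (D² - (r₁-r₂)²) > 0` where `D` is the distance of centers. -/
private lemma disjoint_spheres_key {c₁ c₂ : EuclideanSpace ℝ (Fin 2)} {r₁ r₂ : ℝ}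
    (hr₁ : 0 < r₁) (hr₂ : 0 < r₂)
    (hd : Disjoint (sphere c₁ r₁) (sphere c₂ r₂)) :
    0 < (dist c₁ c₂ ^ 2 - (r₁ + r₂) ^ 2) * (dist c₁ c₂ ^ 2 - (r₁ - r₂) ^ 2) := by
  by_contra hle
  push_neg at hle
  set D := dist c₁ c₂ with hDdef
  have hDnn : 0 ≤ D := dist_nonneg
  have hlow : (r₁ - r₂) ^ 2 ≤ D ^ 2 := by nlinarith [mul_pos hr₁ hr₂]
  have hhigh : D ^ 2 ≤ (r₁ + r₂) ^ 2 := by nlinarith [mul_pos hr₁ hr₂]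
  rcases eq_or_lt_of_le hDnn with hD0 | hDpos
  · -- same center, then r₁ = r₂ and the spheres coincide
    have hcc : c₁ = c₂ := dist_eq_zero.mp hD0.symm
    have hrr : r₁ = r₂ := by nlinarith
    obtain ⟨x, hx⟩ : (sphere c₂ r₂).Nonempty :=
      NormedSpace.sphere_nonempty.mpr hr₂.le
    exact Set.disjoint_left.mp hd (by rw [hcc, hrr]; exact hx) hx
  · -- distinct centers: construct a common point of the two circles
    have hD2 : (0:ℝ) < D ^ 2 := by positivity
    set u1 : ℝ := c₂ 0 - c₁ 0 with hu1
    set u2 : ℝ := c₂ 1 - c₁ 1 with hu2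
    have hDsq : D ^ 2 = u1 ^ 2 + u2 ^ 2 := by
      rw [hDdef, dist_sq_coord, hu1, hu2]; ring
    set t : ℝ := (D ^ 2 + r₁ ^ 2 - r₂ ^ 2) / (2 * D ^ 2) with ht
    set M : ℝ := r₁ ^ 2 - t ^ 2 * D ^ 2 with hMdef
    have hM4 : 4 * D ^ 2 * M = ((r₁ + r₂) ^ 2 - D ^ 2) * (D ^ 2 - (r₁ - r₂) ^ 2) := by
      rw [hMdef, ht]; field_simp; ring
    have hM : 0 ≤ M := by
      have hR : 0 ≤ ((r₁ + r₂) ^ 2 - D ^ 2) * (D ^ 2 - (r₁ - r₂) ^ 2) :=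
        mul_nonneg (by linarith) (by linarith)
      nlinarith
    set w : ℝ := Real.sqrt M / D with hw
    have hw2 : w ^ 2 = M / D ^ 2 := by
      rw [hw, div_pow, Real.sq_sqrt hM]
    set x : EuclideanSpace ℝ (Fin 2) :=
      (WithLp.equiv 2 (Fin 2 → ℝ)).symm ![c₁ 0 + t * u1 - w * u2, c₁ 1 + t * u2 + w * u1]
      with hx
    have hx0 : x 0 = c₁ 0 + t * u1 - w * u2 := rfl
    have hx1 : x 1 = c₁ 1 + t * u2 + w * u1 := rfl
    have hd1 : dist x c₁ ^ 2 = r₁ ^ 2 := by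
      rw [dist_sq_coord, hx0, hx1]
      have e : (c₁ 0 + t * u1 - w * u2 - c₁ 0) ^ 2 + (c₁ 1 + t * u2 + w * u1 - c₁ 1) ^ 2
          = t ^ 2 * (u1 ^ 2 + u2 ^ 2) + w ^ 2 * (u1 ^ 2 + u2 ^ 2) := by ring
      rw [e, ← hDsq, hw2]
      field_simp
      rw [hMdef]; ring
    have hd2 : dist x c₂ ^ 2 = r₂ ^ 2 := by
      rw [dist_sq_coord, hx0, hx1]
      have hc20 : c₂ 0 = c₁ 0 + u1 := by rw [hu1]; ring
      have hc21 : c₂ 1 = c₁ 1 + u2 := by rw [hu2]; ring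
      rw [hc20, hc21]
      have e : (c₁ 0 + t * u1 - w * u2 - (c₁ 0 + u1)) ^ 2
            + (c₁ 1 + t * u2 + w * u1 - (c₁ 1 + u2)) ^ 2
          = (t - 1) ^ 2 * (u1 ^ 2 + u2 ^ 2) + w ^ 2 * (u1 ^ 2 + u2 ^ 2) := by ring
      rw [e, ← hDsq, hw2]
      field_simp
      rw [hMdef, ht]
      field_simp
      ring
    have hm1 : x ∈ sphere c₁ r₁ :=
      mem_sphere.mpr (sq_eq_of_nonneg dist_nonneg hr₁.le hd1)
    have hm2 : x ∈ sphere c₂ r₂ :=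
      mem_sphere.mpr (sq_eq_of_nonneg dist_nonneg hr₂.le hd2)
    exact Set.disjoint_left.mp hd hm1 hm2


private lemma final_step {A C P Q : ℝ} (hA : 0 ≤ A) (hC : 0 ≤ C)
    (hP : 0 < P) (hQ : 0 < Q) (hkey : C * P + A * Q = 0) : C = 0 := by
  have h1 : C * P ≤ 0 := by nlinarith [mul_nonneg hA hQ.le]
  have h2 : C ≤ 0 := by nlinarith
  linarith

set_option maxHeartbeats 2000000 in
/-- No induced `C₄`: there are no circles α, β, γ, δ such that α and β are each
orthogonal to both γ and δ, while α, β are disjoint and γ, δ are disjoint. -/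
theorem no_induced_C4_orthogonal_circles :
    ¬ ∃ (cα cβ cγ cδ : EuclideanSpace ℝ (Fin 2)) (rα rβ rγ rδ : ℝ),
      0 < rα ∧ 0 < rβ ∧ 0 < rγ ∧ 0 < rδ ∧
      rα ^ 2 + rγ ^ 2 = dist cα cγ ^ 2 ∧
      rα ^ 2 + rδ ^ 2 = dist cα cδ ^ 2 ∧
      rβ ^ 2 + rγ ^ 2 = dist cβ cγ ^ 2 ∧
      rβ ^ 2 + rδ ^ 2 = dist cβ cδ ^ 2 ∧
      Disjoint (Metric.sphere cα rα) (Metric.sphere cβ rβ) ∧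
      Disjoint (Metric.sphere cγ rγ) (Metric.sphere cδ rδ) := by
  rintro ⟨cα, cβ, cγ, cδ, rα, rβ, rγ, rδ, hrα, hrβ, hrγ, hrδ, h1, h2, h3, h4, dab, dcd⟩
  have Pab := disjoint_spheres_key hrα hrβ dab
  have Pcd := disjoint_spheres_key hrγ hrδ dcd
  rw [dist_sq_coord] at h1 h2 h3 h4 Pab Pcd
  set a1 : ℝ := cα 0 with ha1
  set a2 : ℝ := cα 1 with ha2
  set b1 : ℝ := cβ 0 with hb1
  set b2 : ℝ := cβ 1 with hb2
  set c1 : ℝ := cγ 0 with hc1'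
  set c2 : ℝ := cγ 1 with hc2'
  set d1 : ℝ := cδ 0 with hd1'
  set d2 : ℝ := cδ 1 with hd2'
  have key : ((c1 - d1) ^ 2 + (c2 - d2) ^ 2) *
        (((a1 - b1) ^ 2 + (a2 - b2) ^ 2 - (rα + rβ) ^ 2) *
         ((a1 - b1) ^ 2 + (a2 - b2) ^ 2 - (rα - rβ) ^ 2)) +
      ((a1 - b1) ^ 2 + (a2 - b2) ^ 2) *
        (((c1 - d1) ^ 2 + (c2 - d2) ^ 2 - (rγ + rδ) ^ 2) *
         ((c1 - d1) ^ 2 + (c2 - d2) ^ 2 - (rγ - rδ) ^ 2)) = 0 := by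
    linear_combination
      ((-1)*d2^2*(rγ^2) + (-2)*d2^2*(rβ^2) + 1*d2^2*(rα^2) + (-1)*d1^2*(rγ^2) + (-2)*d1^2*(rβ^2) + 1*d1^2*(rα^2) + 2*c2*d2*(rγ^2) + 4*c2*d2*(rβ^2) + (-2)*c2*d2*(rα^2) + (-1)*c2^2*(rγ^2) + (-2)*c2^2*(rβ^2) + 1*c2^2*(rα^2) + 1*c2^2*d2^2 + 1*c2^2*d1^2 + (-2)*c2^3*d2 + 1*c2^4 + 2*c1*d1*(rγ^2) + 4*c1*d1*(rβ^2) + (-2)*c1*d1*(rα^2) + (-2)*c1*c2^2*d1 + (-1)*c1^2*(rγ^2) + (-2)*c1^2*(rβ^2) + 1*c1^2*(rα^2) + 1*c1^2*d2^2 + 1*c1^2*d1^2 + (-2)*c1^2*c2*d2 + 2*c1^2*c2^2 + (-2)*c1^3*d1 + 1*c1^4 + 2*b2*c2^2*d2 + (-2)*b2*c2^3 + 4*b2*c1*c2*d1 + (-2)*b2*c1^2*d2 + (-2)*b2*c1^2*c2 + (-1)*b2^2*(rδ^2) + 1*b2^2*(rγ^2) + (-1)*b2^2*d2^2 + (-1)*b2^2*d1^2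 + 1*b2^2*c2^2 + 1*b2^2*c1^2 + (-2)*b1*c2^2*d1 + 4*b1*c1*c2*d2 + (-2)*b1*c1*c2^2 + 2*b1*c1^2*d1 + (-2)*b1*c1^3 + (-1)*b1^2*(rδ^2) + 1*b1^2*(rγ^2) + (-1)*b1^2*d2^2 + (-1)*b1^2*d1^2 + 1*b1^2*c2^2 + 1*b1^2*c1^2 + (-2)*a2*c2*d2^2 + (-2)*a2*c2*d1^2 + 2*a2*c2^2*d2 + 2*a2*c1^2*d2 + 2*a2*b2*(rδ^2) + (-2)*a2*b2*(rγ^2) + 2*a2*b2*d2^2 + 2*a2*b2*d1^2 + (-4)*a2*b2*c2*d2 + 2*a2*b2*c2^2 + (-4)*a2*b2*c1*d1 + 2*a2*b2*c1^2 + 2*a2*b2^2*d2 + (-2)*a2*b2^2*c2 + 4*a2*b1*c2*d1 + (-4)*a2*b1*c1*d2 + 2*a2*b1^2*d2 + (-2)*a2*b1^2*c2 + (-1)*a2^2*(rδ^2) + 1*a2^2*(rγ^2) + 2*a2^2*c2*d2 + (-2)*a2^2*c2^2 + 2*a2^2*c1*d1 + (-2)*a2^2*c1^2 + (-2)*a2^2*b2*d2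 + 2*a2^2*b2*c2 + (-2)*a2^2*b1*d1 + 2*a2^2*b1*c1 + 2*a1*c2^2*d1 + (-2)*a1*c1*d2^2 + (-2)*a1*c1*d1^2 + 2*a1*c1^2*d1 + (-4)*a1*b2*c2*d1 + 4*a1*b2*c1*d2 + 2*a1*b2^2*d1 + (-2)*a1*b2^2*c1 + 2*a1*b1*(rδ^2) + (-2)*a1*b1*(rγ^2) + 2*a1*b1*d2^2 + 2*a1*b1*d1^2 + (-4)*a1*b1*c2*d2 + 2*a1*b1*c2^2 + (-4)*a1*b1*c1*d1 + 2*a1*b1*c1^2 + 2*a1*b1^2*d1 + (-2)*a1*b1^2*c1 + (-1)*a1^2*(rδ^2) + 1*a1^2*(rγ^2) + 2*a1^2*c2*d2 + (-2)*a1^2*c2^2 + 2*a1^2*c1*d1 + (-2)*a1^2*c1^2 + (-2)*a1^2*b2*d2 + 2*a1^2*b2*c2 + (-2)*a1^2*b1*d1 + 2*a1^2*b1*c1) * h1 +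
      ((-2)*b2*c2^2*d2 + 2*b2*c2^3 + (-4)*b2*c1*c2*d1 + 2*b2*c1^2*d2 + 2*b2*c1^2*c2 + 1*b2^2*(rδ^2) + (-1)*b2^2*(rγ^2) + (-1)*b2^2*d2^2 + (-1)*b2^2*d1^2 + 4*b2^2*c2*d2 + (-3)*b2^2*c2^2 + 4*b2^2*c1*d1 + (-3)*b2^2*c1^2 + 2*b1*c2^2*d1 + (-4)*b1*c1*c2*d2 + 2*b1*c1*c2^2 + (-2)*b1*c1^2*d1 + 2*b1*c1^3 + 1*b1^2*(rδ^2) + (-1)*b1^2*(rγ^2) + (-1)*b1^2*d2^2 + (-1)*b1^2*d1^2 + 4*b1^2*c2*d2 + (-3)*b1^2*c2^2 + 4*b1^2*c1*d1 + (-3)*b1^2*c1^2 + 2*a2*c2^2*d2 + (-2)*a2*c2^3 + 4*a2*c1*c2*d1 + (-2)*a2*c1^2*d2 + (-2)*a2*c1^2*c2 + (-2)*a2*b2*(rδ^2) + 2*a2*b2*(rγ^2) + 2*a2*b2*d2^2 + 2*a2*b2*d1^2 + (-4)*a2*b2*c2*d2 + 2*a2*b2*c2^2 + (-4)*a2*b2*c1*d1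 + 2*a2*b2*c1^2 + (-2)*a2*b2^2*d2 + 2*a2*b2^2*c2 + (-4)*a2*b1*c2*d1 + 4*a2*b1*c1*d2 + (-2)*a2*b1^2*d2 + 2*a2*b1^2*c2 + 1*a2^2*(rδ^2) + (-1)*a2^2*(rγ^2) + (-1)*a2^2*d2^2 + (-1)*a2^2*d1^2 + 1*a2^2*c2^2 + 1*a2^2*c1^2 + 2*a2^2*b2*d2 + (-2)*a2^2*b2*c2 + 2*a2^2*b1*d1 + (-2)*a2^2*b1*c1 + (-2)*a1*c2^2*d1 + 4*a1*c1*c2*d2 + (-2)*a1*c1*c2^2 + 2*a1*c1^2*d1 + (-2)*a1*c1^3 + 4*a1*b2*c2*d1 + (-4)*a1*b2*c1*d2 + (-2)*a1*b2^2*d1 + 2*a1*b2^2*c1 + (-2)*a1*b1*(rδ^2) + 2*a1*b1*(rγ^2) + 2*a1*b1*d2^2 + 2*a1*b1*d1^2 + (-4)*a1*b1*c2*d2 + 2*a1*b1*c2^2 + (-4)*a1*b1*c1*d1 + 2*a1*b1*c1^2 + (-2)*a1*b1^2*d1 + 2*a1*b1^2*c1 + 1*a1^2*(rδ^2) + (-1)*a1^2*(rγ^2)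 + (-1)*a1^2*d2^2 + (-1)*a1^2*d1^2 + 1*a1^2*c2^2 + 1*a1^2*c1^2 + 2*a1^2*b2*d2 + (-2)*a1^2*b2*c2 + 2*a1^2*b1*d1 + (-2)*a1^2*b1*c1) * h2 +
      (1*d2^2*(rγ^2) + 1*d2^2*(rβ^2) + 1*d1^2*(rγ^2) + 1*d1^2*(rβ^2) + (-2)*c2*d2*(rγ^2) + (-2)*c2*d2*(rβ^2) + 1*c2^2*(rγ^2) + 1*c2^2*(rβ^2) + (-1)*c2^2*d2^2 + (-1)*c2^2*d1^2 + 2*c2^3*d2 + (-1)*c2^4 + (-2)*c1*d1*(rγ^2) + (-2)*c1*d1*(rβ^2) + 2*c1*c2^2*d1 + 1*c1^2*(rγ^2) + 1*c1^2*(rβ^2) + (-1)*c1^2*d2^2 + (-1)*c1^2*d1^2 + 2*c1^2*c2*d2 + (-2)*c1^2*c2^2 + 2*c1^3*d1 + (-1)*c1^4 + (-2)*b2*c2*d2^2 + (-2)*b2*c2*d1^2 + 2*b2*c2^2*d2 + 2*b2*c1^2*d2 + (-1)*b2^2*d2^2 + (-1)*b2^2*d1^2 + 2*b2^2*c2*d2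 + (-1)*b2^2*c2^2 + 2*b2^2*c1*d1 + (-1)*b2^2*c1^2 + 2*b1*c2^2*d1 + (-2)*b1*c1*d2^2 + (-2)*b1*c1*d1^2 + 2*b1*c1^2*d1 + (-1)*b1^2*d2^2 + (-1)*b1^2*d1^2 + 2*b1^2*c2*d2 + (-1)*b1^2*c2^2 + 2*b1^2*c1*d1 + (-1)*b1^2*c1^2 + 4*a2*c2*d2^2 + 4*a2*c2*d1^2 + (-6)*a2*c2^2*d2 + 2*a2*c2^3 + (-4)*a2*c1*c2*d1 + (-2)*a2*c1^2*d2 + 2*a2*c1^2*c2 + 4*a2*b2*d2^2 + 4*a2*b2*d1^2 + (-4)*a2*b2*c2*d2 + (-4)*a2*b2*c1*d1 + (-4)*a2*b1*c2*d1 + 4*a2*b1*c1*d2 + (-4)*a2^2*d2^2 + (-4)*a2^2*d1^2 + 4*a2^2*c2*d2 + 4*a2^2*c1*d1 + (-2)*a2^2*b2*d2 + 2*a2^2*b2*c2 + 2*a2^2*b1*d1 + (-2)*a2^2*b1*c1 + 2*a2^3*d2 + (-2)*a2^3*c2 + (-2)*a1*c2^2*d1 + 4*a1*c1*d2^2 +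 4*a1*c1*d1^2 + (-4)*a1*c1*c2*d2 + 2*a1*c1*c2^2 + (-6)*a1*c1^2*d1 + 2*a1*c1^3 + 4*a1*b2*c2*d1 + (-4)*a1*b2*c1*d2 + 4*a1*b1*d2^2 + 4*a1*b1*d1^2 + (-4)*a1*b1*c2*d2 + (-4)*a1*b1*c1*d1 + (-4)*a1*a2*b2*d1 + 4*a1*a2*b2*c1 + (-4)*a1*a2*b1*d2 + 4*a1*a2*b1*c2 + 2*a1*a2^2*d1 + (-2)*a1*a2^2*c1 + (-4)*a1^2*d2^2 + (-4)*a1^2*d1^2 + 4*a1^2*c2*d2 + 4*a1^2*c1*d1 + 2*a1^2*b2*d2 + (-2)*a1^2*b2*c2 + (-2)*a1^2*b1*d1 + 2*a1^2*b1*c1 + 2*a1^2*a2*d2 + (-2)*a1^2*a2*c2 + 2*a1^3*d1 + (-2)*a1^3*c1) * h3 +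
      (2*b2*c2^2*d2 + (-2)*b2*c2^3 + 4*b2*c1*c2*d1 + (-2)*b2*c1^2*d2 + (-2)*b2*c1^2*c2 + (-2)*b1*c2^2*d1 + 4*b1*c1*c2*d2 + (-2)*b1*c1*c2^2 + 2*b1*c1^2*d1 + (-2)*b1*c1^3 + (-2)*a2*c2^2*d2 + 2*a2*c2^3 + (-4)*a2*c1*c2*d1 + 2*a2*c1^2*d2 + 2*a2*c1^2*c2 + (-4)*a2*b2*c2*d2 + 4*a2*b2*c2^2 + (-4)*a2*b2*c1*d1 + 4*a2*b2*c1^2 + 4*a2*b1*c2*d1 + (-4)*a2*b1*c1*d2 + 4*a2^2*c2*d2 + (-4)*a2^2*c2^2 + 4*a2^2*c1*d1 + (-4)*a2^2*c1^2 + 2*a2^2*b2*d2 + (-2)*a2^2*b2*c2 + (-2)*a2^2*b1*d1 + 2*a2^2*b1*c1 + (-2)*a2^3*d2 + 2*a2^3*c2 + 2*a1*c2^2*d1 + (-4)*a1*c1*c2*d2 + 2*a1*c1*c2^2 + (-2)*a1*c1^2*d1 + 2*a1*c1^3 + (-4)*a1*b2*c2*d1 + 4*a1*b2*c1*d2 +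 (-4)*a1*b1*c2*d2 + 4*a1*b1*c2^2 + (-4)*a1*b1*c1*d1 + 4*a1*b1*c1^2 + 4*a1*a2*b2*d1 + (-4)*a1*a2*b2*c1 + 4*a1*a2*b1*d2 + (-4)*a1*a2*b1*c2 + (-2)*a1*a2^2*d1 + 2*a1*a2^2*c1 + 4*a1^2*c2*d2 + (-4)*a1^2*c2^2 + 4*a1^2*c1*d1 + (-4)*a1^2*c1^2 + (-2)*a1^2*b2*d2 + 2*a1^2*b2*c2 + 2*a1^2*b1*d1 + (-2)*a1^2*b1*c1 + (-2)*a1^2*a2*d2 + 2*a1^2*a2*c2 + (-2)*a1^3*d1 + 2*a1^3*c1) * h4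
  have hAnn : (0:ℝ) ≤ (a1 - b1) ^ 2 + (a2 - b2) ^ 2 := by positivity
  have hCnn : (0:ℝ) ≤ (c1 - d1) ^ 2 + (c2 - d2) ^ 2 := by positivity
  have hC0 : (c1 - d1) ^ 2 + (c2 - d2) ^ 2 = 0 := final_step hAnn hCnn Pab Pcd key
  clear key Pab hAnn hCnn h3 h4 dab dcd hrα hrβ
  have hceq1 : c1 = d1 := by
    have h' : (c1 - d1) ^ 2 = 0 :=
      le_antisymm (by linarith [sq_nonneg (c2 - d2)]) (sq_nonneg _)
    have := (pow_eq_zero_iff two_ne_zero).mp h'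
    linarith
  have hceq2 : c2 = d2 := by
    have h' : (c2 - d2) ^ 2 = 0 :=
      le_antisymm (by linarith [sq_nonneg (c1 - d1)]) (sq_nonneg _)
    have := (pow_eq_zero_iff two_ne_zero).mp h'
    linarith
  have hst : rγ ^ 2 = rδ ^ 2 := by
    linear_combination h1 - h2 + (c1 + d1 - 2 * a1) * hceq1 + (c2 + d2 - 2 * a2) * hceq2
  have hrr : rγ = rδ := by
    have h0 : (rγ - rδ) * (rγ + rδ) = 0 := by linear_combination hst
    rcases mul_eq_zero.mp h0 with h' | h'
    · linarith
    · linarith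
  have Pcd' : (0:ℝ) < (0 - (rγ + rδ) ^ 2) * (0 - (rγ - rδ) ^ 2) := by
    rw [hC0] at Pcd; exact Pcd
  rw [hrr] at Pcd'
  have hz : (0 - (rδ + rδ) ^ 2) * (0 - (rδ - rδ) ^ 2) = 0 := by ring
  linarith
end

section
/- Let α be a circle of radius r and let S be a finite set of circles, each orthogonal to α, each of radius at least r, and pairwise non-nested (no circle of S is contained in the closed disk of another). Then |S| ≤ 6. -/
/-!
Move the origin to the centre `cα` of α. A circle `(x, ρ)` orthogonal to α has
`‖x - cα‖² = r² + ρ² ≥ 2 r²`, as `r ≤ ρ`. Two disjoint non-nested circles lie outside each other, so by the law of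
cosines the centre vectors `u, v` of two circles of `S` satisfy `⟪u, v⟫ ≤ 0` if the circles are
disjoint and `⟪u, v⟫ = r² ≤ ‖u‖ ‖v‖ / 2` if they are orthogonal: the centres subtend an angle of
at least `π / 3` at `cα`. Among seven nonzero vectors of the plane, two have their arguments in the
same one of six sectors of width `π / 3`, so they make an angle smaller than `π / 3`.
-/

open Metric InnerProductGeometry Module Real
open scoped RealInnerProductSpace

section Spheres

variable {E : Type*} [NormedAddCommGroup E] [NormedSpace ℝ E]

theorem sphere_inter_sphere_nonempty (hE : 1 < Module.rank ℝ E) {x y : E} {ρ σ : ℝ}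
    (hle : |ρ - σ| ≤ dist x y) (hge : dist x y ≤ ρ + σ) : (sphere x ρ ∩ sphere y σ).Nonempty := by
  obtain ⟨hle₁, hle₂⟩ := abs_le.mp hle
  have hρ : 0 ≤ ρ := by linarith
  have : Nontrivial E := rank_pos_iff_nontrivial.mp (zero_lt_one.trans hE)
  obtain ⟨w, hw, hyx⟩ : ∃ w : E, ‖w‖ = 1 ∧ y - x = dist x y • w := by
    obtain rfl | hxy := eq_or_ne x y
    · obtain ⟨w, hw⟩ := exists_norm_eq E zero_le_one
      exact ⟨w, hw, by simp⟩
    · have hd := dist_ne_zero.mpr hxy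
      refine ⟨(dist x y)⁻¹ • (y - x), ?_, ?_⟩
      · rw [norm_smul, norm_inv, Real.norm_of_nonneg dist_nonneg, ← dist_eq_norm',
          inv_mul_cancel₀ hd]
      · rw [smul_smul, mul_inv_cancel₀ hd, one_smul]
  have hmem : ∀ t : ℝ, x + t • w ∈ sphere x |t| := by
    intro t
    rw [mem_sphere, dist_eq_norm, add_sub_cancel_left, norm_smul, hw, mul_one, Real.norm_eq_abs]
  have hdist : ∀ t : ℝ, dist (x + t • w) y = |t - dist x y| := by
    intro t
    rw [dist_eq_norm, show x + t • w - y = (t - dist x y) • w by rw [sub_smul, ← hyx]; abel,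
      norm_smul, hw, mul_one, Real.norm_eq_abs]
  -- On the connected sphere `sphere x ρ`, the distance to `y` runs from
  -- `|ρ - dist x y|` to `ρ + dist x y`.
  have hnear : x + ρ • w ∈ sphere x ρ := by simpa [abs_of_nonneg hρ] using hmem ρ
  have hfar : x + (-ρ) • w ∈ sphere x ρ := by simpa [abs_of_nonneg hρ] using hmem (-ρ)
  have hσ : σ ∈ Set.Icc (dist (x + ρ • w) y) (dist (x + (-ρ) • w) y) := by
    rw [hdist, hdist, show -ρ - dist x y = -(ρ + dist x y) by ring, abs_neg,
      abs_of_nonneg (add_nonneg hρ dist_nonneg)]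
    exact ⟨abs_le.mpr ⟨by linarith, by linarith⟩, by linarith⟩
  obtain ⟨z, hz, hzy⟩ := (isConnected_sphere hE x hρ).isPreconnected.intermediate_value hnear hfar
    (continuous_id.dist continuous_const).continuousOn hσ
  exact ⟨z, hz, hzy⟩

theorem add_le_dist_of_disjoint_sphere_of_not_closedBall_subset (hE : 1 < Module.rank ℝ E)
    {x y : E} {ρ σ : ℝ} (hdisj : Disjoint (sphere x ρ) (sphere y σ))
    (hxy : ¬ closedBall x ρ ⊆ closedBall y σ) (hyx : ¬ closedBall y σ ⊆ closedBall x ρ) :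
    ρ + σ ≤ dist x y := by
  by_contra! hlt
  have h₁ : ρ - σ < dist x y := by
    by_contra! h
    exact hyx (closedBall_subset_closedBall' (by rw [dist_comm]; linarith))
  have h₂ : σ - ρ < dist x y := by
    by_contra! h
    exact hxy (closedBall_subset_closedBall' (by linarith))
  exact (sphere_inter_sphere_nonempty hE (abs_sub_lt_iff.mpr ⟨h₁, h₂⟩).le hlt.le).ne_empty
    hdisj.inter_eq

end Spheres

theorem Complex.angle_eq_abs_arg_sub_arg {x y : ℂ} (hx : x ≠ 0) (hy : y ≠ 0)
    (h : |x.arg - y.arg| < π) : angle x y = |x.arg - y.arg| := by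
  obtain ⟨hlo, hhi⟩ := abs_lt.mp h
  rw [angle_eq_abs_arg hx hy, arg_coe_angle_eq_iff_eq_toReal.mp (arg_div_coe_angle hx hy),
    ← Real.Angle.coe_sub, Real.Angle.toReal_coe_eq_self_iff.mpr ⟨hlo, hhi.le⟩]

theorem Complex.card_le_six_of_pi_div_three_le_angle {ι : Type*} (s : Finset ι) (f : ι → ℂ)
    (hf : ∀ i ∈ s, f i ≠ 0) (hangle : ∀ i ∈ s, ∀ j ∈ s, i ≠ j → π / 3 ≤ angle (f i) (f j)) :
    s.card ≤ 6 := by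
  set sector : ι → ℤ := fun i ↦ ⌊(π - (f i).arg) / (π / 3)⌋
  have hsector : ∀ i ∈ s, sector i ∈ Finset.Icc (0 : ℤ) 5 := by
    intro i _
    have hlo := neg_pi_lt_arg (f i)
    have hhi := arg_le_pi (f i)
    rw [Finset.mem_Icc, Int.floor_nonneg, ← Int.lt_add_one_iff, Int.floor_lt,
      div_lt_iff₀ (by positivity)]
    push_cast
    exact ⟨div_nonneg (by linarith) (by positivity), by linarith⟩
  by_contra! hcard
  obtain ⟨i, hi, j, hj, hij, hsame⟩ := Finset.exists_ne_map_eq_of_card_lt_of_maps_to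
    (by simpa using hcard) hsector
  have hclose : |(f i).arg - (f j).arg| < π / 3 := by
    have := Int.abs_sub_lt_one_of_floor_eq_floor hsame
    rwa [← sub_div, abs_div, abs_of_pos (by positivity : 0 < π / 3), div_lt_one (by positivity),
      sub_sub_sub_cancel_left, abs_sub_comm] at this
  have := Complex.angle_eq_abs_arg_sub_arg (hf i hi) (hf j hj) (by linarith [pi_pos])
  linarith [hangle i hi j hj hij]

section Angles

variable {V : Type*} [NormedAddCommGroup V] [InnerProductSpace ℝ V]

theorem pi_div_three_le_angle_of_inner_le {u v : V} (h : ⟪u, v⟫ ≤ ‖u‖ * ‖v‖ / 2) :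
    π / 3 ≤ angle u v := by
  have hcos : ⟪u, v⟫ / (‖u‖ * ‖v‖) ≤ 1 / 2 := by
    rcases (mul_nonneg (norm_nonneg u) (norm_nonneg v)).eq_or_lt with h0 | h0
    · rw [← h0, div_zero]
      norm_num
    · rwa [div_le_iff₀ h0, one_div_mul_eq_div]
  calc π / 3 = arccos (1 / 2) := by
        rw [← cos_pi_div_three, arccos_cos (by positivity) (by linarith [pi_pos])]
    _ ≤ angle u v := arccos_le_arccos hcos

/-- The circles `(x, ρ)` and `(y, σ)` are orthogonal to the circle `(c, r)` and are either
externally separated or orthogonal to each other. -/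
theorem pi_div_three_le_angle_of_orthogonal_circles {c x y : V} {r ρ σ : ℝ} (hr : 0 ≤ r)
    (hρ : r ≤ ρ) (hσ : r ≤ σ) (hx : r ^ 2 + ρ ^ 2 = dist c x ^ 2)
    (hy : r ^ 2 + σ ^ 2 = dist c y ^ 2)
    (hxy : ρ + σ ≤ dist x y ∨ ρ ^ 2 + σ ^ 2 = dist x y ^ 2) :
    π / 3 ≤ angle (x - c) (y - c) := by
  apply pi_div_three_le_angle_of_inner_le
  rw [dist_eq_norm'] at hx hy
  have hinner : 2 * ⟪x - c, y - c⟫ = 2 * r ^ 2 + ρ ^ 2 + σ ^ 2 - dist x y ^ 2 := by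
    rw [dist_eq_norm, ← sub_sub_sub_cancel_right x y c, norm_sub_sq_real]
    linarith
  rcases hxy with hsep | horth
  · have : (ρ + σ) ^ 2 ≤ dist x y ^ 2 := pow_le_pow_left₀ (by linarith) hsep 2
    have : ⟪x - c, y - c⟫ ≤ 0 := by nlinarith
    linarith [mul_nonneg (norm_nonneg (x - c)) (norm_nonneg (y - c))]
  · have hx2 : 2 * r ^ 2 ≤ ‖x - c‖ ^ 2 := by nlinarith
    have hy2 : 2 * r ^ 2 ≤ ‖y - c‖ ^ 2 := by nlinarith
    have : 2 * r ^ 2 ≤ ‖x - c‖ * ‖y - c‖ := le_of_sq_le_sq (by nlinarith) (by positivity)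
    linarith

theorem card_le_six_of_pi_div_three_le_angle (hV : finrank ℝ V = 2) {ι : Type*} (s : Finset ι)
    (f : ι → V) (hf : ∀ i ∈ s, f i ≠ 0)
    (hangle : ∀ i ∈ s, ∀ j ∈ s, i ≠ j → π / 3 ≤ angle (f i) (f j)) :
    s.card ≤ 6 := by
  have : FiniteDimensional ℝ V := Module.finite_of_finrank_eq_succ hV
  let e := Complex.isometryOfOrthonormal ((stdOrthonormalBasis ℝ V).reindex (finCongr hV))
  refine Complex.card_le_six_of_pi_div_three_le_angle s (e.symm ∘ f) (by simpa using hf) ?_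
  intro i hi j hj hij
  rw [Function.comp_apply, Function.comp_apply, ← e.symm.coe_toLinearIsometry,
    LinearIsometry.angle_map]
  exact hangle i hi j hj hij

end Angles

/-- In an arrangement of orthogonal circles (any two circles are disjoint or
orthogonal), a set `S` of circles, each orthogonal to a circle α of radius `r`,
each of radius at least `r`, and pairwise non-nested, has at most 6 elements. -/
theorem at_most_six_neighbours
    (cα : EuclideanSpace ℝ (Fin 2)) (r : ℝ) (hr : 0 < r)
    (S : Finset (EuclideanSpace ℝ (Fin 2) × ℝ))
    (hpos : ∀ p ∈ S, r ≤ p.2)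
    (horth : ∀ p ∈ S, r ^ 2 + p.2 ^ 2 = dist cα p.1 ^ 2)
    (harr : ∀ p ∈ S, ∀ q ∈ S, p ≠ q →
      Disjoint (Metric.sphere p.1 p.2) (Metric.sphere q.1 q.2) ∨
      p.2 ^ 2 + q.2 ^ 2 = dist p.1 q.1 ^ 2)
    (hnonnested : ∀ p ∈ S, ∀ q ∈ S, p ≠ q →
      ¬ Metric.closedBall p.1 p.2 ⊆ Metric.closedBall q.1 q.2) :
    S.card ≤ 6 := by
  have hrank : 1 < Module.rank ℝ (EuclideanSpace ℝ (Fin 2)) := by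
    rw [← Module.finrank_eq_rank, finrank_euclideanSpace_fin]
    norm_num
  refine card_le_six_of_pi_div_three_le_angle finrank_euclideanSpace_fin S (·.1 - cα) ?_ ?_
  · intro p hp hcentre
    have := horth p hp
    rw [dist_eq_norm', hcentre, norm_zero] at this
    nlinarith
  · intro p hp q hq hpq
    refine pi_div_three_le_angle_of_orthogonal_circles hr.le (hpos p hp) (hpos q hq) (horth p hp)
      (horth q hq) ((harr p hp q hq hpq).imp_left fun hdisj ↦ ?_)
    exact add_le_dist_of_disjoint_sphere_of_not_closedBall_subset hrank hdisj
      (hnonnested p hp q hq hpq) (hnonnested q hq p hp hpq.symm)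
end

section
/- Let α be a circle of radius r and let S be a set of 6 circles, each orthogonal to α, each of radius at least r, pairwise non-nested. Then the circle α (as a point set) is contained in the union of the closed disks bounded by the circles in S. -/
/-!
Put the centre of `α` at the origin and let `v` be the centre of a circle of `S`, of radius
`ρ ≥ r`. Orthogonality gives `‖v‖² = r² + ρ²`, so a point `u` of `α` lies in the disk of that
circle iff `⟪u, v⟫ ≥ r²`, and `‖v‖ ≥ √2 r`. Two circles of `S` are orthogonal or, being disjoint
and non-nested, external to each other; either way the distance of their centres is at least
`√(ρ² + σ²)`, which amounts to `⟪v, w⟫ ≤ r²`. Hence the six centres subtend pairwise angles of at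
least `π / 3` at the origin. Six such directions leave no arc of length `3π / 2` empty, so every
`u` makes an angle at most `π / 4` with some centre `v`, and then
`⟪u, v⟫ ≥ ‖u‖ ‖v‖ / √2 ≥ r²`.
-/

open Real Module Metric
open scoped InnerProductSpace

theorem Finset.exists_ne_abs_sub_lt_of_mapsTo_Ico {ι : Type*} {S : Finset ι} {f : ι → ℝ}
    {a w : ℝ} (hw : 0 < w) {n : ℕ} (hn : n < S.card)
    (hf : ∀ p ∈ S, f p ∈ Set.Ico a (a + n * w)) :
    ∃ p ∈ S, ∃ q ∈ S, p ≠ q ∧ |f p - f q| < w := by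
  have hbin : ∀ p ∈ S, ⌊(f p - a) / w⌋ ∈ Finset.Ico (0 : ℤ) n := by
    intro p hp
    obtain ⟨h₁, h₂⟩ := hf p hp
    rw [Finset.mem_Ico, Int.floor_nonneg, Int.floor_lt, le_div_iff₀ hw, div_lt_iff₀ hw]
    push_cast
    constructor <;> linarith
  obtain ⟨p, hp, q, hq, hpq, hfloor⟩ :=
    Finset.exists_ne_map_eq_of_card_lt_of_maps_to (by simpa using hn) hbin
  refine ⟨p, hp, q, hq, hpq, ?_⟩
  have h := Int.abs_sub_lt_one_of_floor_eq_floor hfloor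
  rwa [← sub_div, sub_sub_sub_cancel_right, abs_div, abs_of_pos hw, div_lt_one hw] at h

theorem Real.le_abs_of_cos_le_cos {x y : ℝ} (hy : y ≤ π) (h : cos x ≤ cos y) : y ≤ |x| := by
  by_contra! hxy
  exact h.not_gt (cos_abs x ▸ cos_lt_cos_of_nonneg_of_le_pi (abs_nonneg x) hy hxy)

theorem Real.abs_lt_of_cos_lt_cos {x y : ℝ} (hy : 0 ≤ y) (hx : |x| ≤ π) (h : cos y < cos x) :
    |x| < y := by
  by_contra! hxy
  exact h.not_ge (cos_abs x ▸ cos_le_cos_of_nonneg_of_le_pi hy hx hxy)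

theorem Real.Angle.exists_sqrt_two_div_two_le_cos {ι : Type*} {S : Finset ι} (hS : 5 < S.card)
    (φ : ι → Real.Angle) (hsep : ∀ p ∈ S, ∀ q ∈ S, p ≠ q → (φ p - φ q).cos ≤ 1 / 2) :
    ∃ p ∈ S, √2 / 2 ≤ (φ p).cos := by
  by_contra! hfar
  -- Measured from the direction `π`, all six angles lie in `(-3π/4, 3π/4)`, yet they are
  -- pairwise `π/3` apart: five bins of width `3π/10` cannot separate them.
  have hbound : ∀ p ∈ S, |(φ p - π).toReal| < 3 * π / 4 := by
    intro p hp
    refine abs_lt_of_cos_lt_cos (by positivity) (abs_toReal_le_pi _) ?_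
    rw [cos_toReal, cos_sub_pi, show 3 * π / 4 = π - π / 4 by ring, Real.cos_pi_sub,
      cos_pi_div_four]
    linarith [hfar p hp]
  have hspread : ∀ p ∈ S, ∀ q ∈ S, p ≠ q → π / 3 ≤ |(φ p - π).toReal - (φ q - π).toReal| := by
    intro p hp q hq hpq
    refine le_abs_of_cos_le_cos (by linarith [pi_pos]) ?_
    rw [cos_pi_div_three, ← Real.Angle.cos_coe, Real.Angle.coe_sub, coe_toReal, coe_toReal,
      sub_sub_sub_cancel_right]
    exact hsep p hp q hq hpq
  obtain ⟨p, hp, q, hq, hpq, hclose⟩ :=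
    Finset.exists_ne_abs_sub_lt_of_mapsTo_Ico (f := fun p => (φ p - π).toReal)
      (a := -(3 * π / 4)) (w := 3 * π / 10)
      (by positivity) hS fun p hp => by
        obtain ⟨h₁, h₂⟩ := abs_lt.1 (hbound p hp)
        constructor <;> push_cast <;> linarith
  linarith [hspread p hp q hq hpq, pi_pos]

theorem exists_sqrt_two_div_two_mul_le_inner {V : Type*} [NormedAddCommGroup V]
    [InnerProductSpace ℝ V] [Fact (finrank ℝ V = 2)] {ι : Type*} {S : Finset ι}
    (hS : 5 < S.card) {u : V} (hu : u ≠ 0) {v : ι → V} (hv : ∀ p ∈ S, v p ≠ 0)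
    (hsep : ∀ p ∈ S, ∀ q ∈ S, p ≠ q → 2 * ⟪v p, v q⟫_ℝ ≤ ‖v p‖ * ‖v q‖) :
    ∃ p ∈ S, √2 / 2 * (‖u‖ * ‖v p‖) ≤ ⟪u, v p⟫_ℝ := by
  have := FiniteDimensional.of_fact_finrank_eq_two (K := ℝ) (V := V)
  let o : Orientation ℝ V (Fin 2) := (finBasisOfFinrankEq ℝ V Fact.out).orientation
  obtain ⟨p, hp, hcos⟩ := Real.Angle.exists_sqrt_two_div_two_le_cos hS (fun p => o.oangle u (v p))
    fun p hp q hq hpq => by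
      have hpos : 0 < ‖v q‖ * ‖v p‖ := by have := hv p hp; have := hv q hq; positivity
      rw [o.oangle_sub_left hu (hv q hq) (hv p hp), o.cos_oangle_eq_inner_div_norm_mul_norm
        (hv q hq) (hv p hp), div_le_iff₀ hpos, real_inner_comm]
      linarith [hsep p hp q hq hpq]
  refine ⟨p, hp, ?_⟩
  rw [o.inner_eq_norm_mul_norm_mul_cos_oangle, mul_comm]
  exact mul_le_mul_of_nonneg_left hcos (by positivity)

section Spheres

variable {E : Type*} [NormedAddCommGroup E] [NormedSpace ℝ E]

theorem exists_mem_sphere_inter_sphere (hE : 1 < Module.rank ℝ E) {x y : E} (hxy : x ≠ y)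
    {r s : ℝ} (h₁ : dist x y ≤ r + s) (h₂ : r ≤ s + dist x y) (h₃ : s ≤ r + dist x y) :
    (sphere x r ∩ sphere y s).Nonempty := by
  have hd : 0 < dist x y := dist_pos.2 hxy
  have hs : 0 ≤ s := by linarith
  have hnorm (t : ℝ) : ‖t • (y - x)‖ = |t| * dist x y := by
    rw [norm_smul, Real.norm_eq_abs, dist_eq_norm']
  have hdist (t : ℝ) : dist (y + t • (y - x)) x = |dist x y + t * dist x y| := by
    rw [dist_eq_norm, show y + t • (y - x) - x = (1 + t) • (y - x) by module, hnorm,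
      ← one_add_mul, abs_mul, abs_of_pos hd]
  have hsphere (t : ℝ) (ht : |t| = s / dist x y) : y + t • (y - x) ∈ sphere y s := by
    rw [mem_sphere, dist_self_add_left, hnorm, ht, div_mul_cancel₀ _ hd.ne']
  -- the points of `sphere y s` nearest to and farthest from `x`
  have hnear := hsphere (-(s / dist x y)) (by rw [abs_neg, abs_of_nonneg (by positivity)])
  have hfar := hsphere (s / dist x y) (abs_of_nonneg (by positivity))
  have hr : r ∈ Set.Icc (dist (y + (-(s / dist x y)) • (y - x)) x)
      (dist (y + (s / dist x y) • (y - x)) x) := by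
    rw [hdist, hdist, neg_mul, div_mul_cancel₀ _ hd.ne',
      abs_of_nonneg (by positivity : 0 ≤ dist x y + s)]
    exact ⟨abs_le.2 ⟨by linarith, by linarith⟩, by linarith⟩
  obtain ⟨z, hz, hzr⟩ := (isConnected_sphere hE y hs).isPreconnected.intermediate_value
    hnear hfar (continuous_id.dist continuous_const).continuousOn hr
  exact ⟨z, by rwa [mem_sphere], hz⟩

theorem add_le_dist_of_disjoint_sphere (hE : 1 < Module.rank ℝ E) {x y : E} {r s : ℝ}
    (hdisj : Disjoint (sphere x r) (sphere y s)) (hxy : ¬ closedBall x r ⊆ closedBall y s)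
    (hyx : ¬ closedBall y s ⊆ closedBall x r) : r + s ≤ dist x y := by
  have h₂ : r < s + dist x y := by
    by_contra! h
    exact hyx (closedBall_subset_closedBall' (by rw [dist_comm]; linarith))
  have h₃ : s < r + dist x y := by
    by_contra! h
    exact hxy (closedBall_subset_closedBall' h)
  have hne : x ≠ y := by
    rintro rfl
    rw [dist_self] at h₂ h₃
    linarith
  by_contra! h₁
  exact (exists_mem_sphere_inter_sphere hE hne h₁.le h₂.le h₃.le).ne_empty hdisj.inter_eq

end Spheres

theorem sqrt_two_mul_le_norm_sub_of_orthogonal {E : Type*} [SeminormedAddCommGroup E]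
    {c p : E} {r ρ : ℝ} (hr : 0 ≤ r) (hrρ : r ≤ ρ) (hp : r ^ 2 + ρ ^ 2 = dist c p ^ 2) :
    √2 * r ≤ ‖p - c‖ := by
  rw [← pow_le_pow_iff_left₀ (by positivity) (norm_nonneg _) two_ne_zero, mul_pow,
    sq_sqrt zero_le_two, ← dist_eq_norm, dist_comm, ← hp]
  nlinarith

section Orthogonal

variable {E : Type*} [NormedAddCommGroup E] [InnerProductSpace ℝ E]

theorem inner_sub_sub_le_sq_of_orthogonal {c p q : E} {r ρ σ : ℝ}
    (hp : r ^ 2 + ρ ^ 2 = dist c p ^ 2) (hq : r ^ 2 + σ ^ 2 = dist c q ^ 2)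
    (hpq : ρ ^ 2 + σ ^ 2 ≤ dist p q ^ 2) : ⟪p - c, q - c⟫_ℝ ≤ r ^ 2 := by
  rw [dist_comm, dist_eq_norm] at hp hq
  rw [dist_eq_norm, ← sub_sub_sub_cancel_right p q c, norm_sub_sq_real] at hpq
  linarith

theorem mem_closedBall_of_sq_le_inner {c x p : E} {r ρ : ℝ} (hρ : 0 ≤ ρ)
    (hx : dist x c = r) (hp : r ^ 2 + ρ ^ 2 = dist c p ^ 2)
    (h : r ^ 2 ≤ ⟪x - c, p - c⟫_ℝ) : x ∈ closedBall p ρ := by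
  rw [dist_comm, dist_eq_norm] at hp
  rw [dist_eq_norm] at hx
  rw [mem_closedBall, ← pow_le_pow_iff_left₀ dist_nonneg hρ two_ne_zero, dist_eq_norm,
    ← sub_sub_sub_cancel_right x p c, norm_sub_sq_real, hx]
  linarith

end Orthogonal

/-- If such a set `S` has exactly 6 circles, each orthogonal to α, of radius at
least `r`, pairwise disjoint-or-orthogonal and non-nested, then the circle α is
contained in the union of the closed disks bounded by the circles in `S`. -/
theorem six_neighbours_cover
    (cα : EuclideanSpace ℝ (Fin 2)) (r : ℝ) (hr : 0 < r)
    (S : Finset (EuclideanSpace ℝ (Fin 2) × ℝ))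
    (hpos : ∀ p ∈ S, r ≤ p.2)
    (horth : ∀ p ∈ S, r ^ 2 + p.2 ^ 2 = dist cα p.1 ^ 2)
    (harr : ∀ p ∈ S, ∀ q ∈ S, p ≠ q →
      Disjoint (Metric.sphere p.1 p.2) (Metric.sphere q.1 q.2) ∨
      p.2 ^ 2 + q.2 ^ 2 = dist p.1 q.1 ^ 2)
    (hnonnested : ∀ p ∈ S, ∀ q ∈ S, p ≠ q →
      ¬ Metric.closedBall p.1 p.2 ⊆ Metric.closedBall q.1 q.2)
    (hcard : S.card = 6) :
    Metric.sphere cα r ⊆ ⋃ p ∈ S, Metric.closedBall p.1 p.2 := by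
  have hrank : 1 < Module.rank ℝ (EuclideanSpace ℝ (Fin 2)) := by
    rw [← finrank_eq_rank, finrank_euclideanSpace_fin]; norm_num
  have : Fact (finrank ℝ (EuclideanSpace ℝ (Fin 2)) = 2) := ⟨finrank_euclideanSpace_fin⟩
  have hnorm : ∀ p ∈ S, √2 * r ≤ ‖p.1 - cα‖ := fun p hp =>
    sqrt_two_mul_le_norm_sub_of_orthogonal hr.le (hpos p hp) (horth p hp)
  have hinner : ∀ p ∈ S, ∀ q ∈ S, p ≠ q → ⟪p.1 - cα, q.1 - cα⟫_ℝ ≤ r ^ 2 := by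
    intro p hp q hq hpq
    refine inner_sub_sub_le_sq_of_orthogonal (horth p hp) (horth q hq) ?_
    rcases harr p hp q hq hpq with hdisj | hperp
    · have := add_le_dist_of_disjoint_sphere hrank hdisj (hnonnested p hp q hq hpq)
        (hnonnested q hq p hp hpq.symm)
      nlinarith [hr.trans_le (hpos p hp), hr.trans_le (hpos q hq)]
    · exact hperp.le
  intro x hx
  obtain ⟨p, hp, hnear⟩ := exists_sqrt_two_div_two_mul_le_inner (by omega : 5 < S.card)
    (u := x - cα) (v := fun p => p.1 - cα) (sub_ne_zero.2 (ne_of_mem_sphere hx hr.ne'))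
    (fun p hp => norm_pos_iff.1 ((by positivity : 0 < √2 * r).trans_le (hnorm p hp)))
    fun p hp q hq hpq => calc
      2 * ⟪p.1 - cα, q.1 - cα⟫_ℝ ≤ (√2 * r) * (√2 * r) := by
        nlinarith [hinner p hp q hq hpq, sq_sqrt (zero_le_two (α := ℝ))]
      _ ≤ ‖p.1 - cα‖ * ‖q.1 - cα‖ :=
        mul_le_mul (hnorm p hp) (hnorm q hq) (by positivity) (norm_nonneg _)
  refine Set.mem_iUnion₂.2 ⟨p, hp, mem_closedBall_of_sq_le_inner (hr.le.trans (hpos p hp))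
    (mem_sphere.1 hx) (horth p hp) ?_⟩
  calc r ^ 2 = √2 / 2 * (r * (√2 * r)) := by ring_nf; rw [sq_sqrt zero_le_two]; ring
    _ ≤ √2 / 2 * (‖x - cα‖ * ‖p.1 - cα‖) := by
      rw [← dist_eq_norm, mem_sphere.1 hx]; gcongr; exact hnorm p hp
    _ ≤ ⟪x - cα, p.1 - cα⟫_ℝ := hnear
end

section
/- Inversion with respect to a circle preserves orthogonality: if ι is the inversion map with center O and radius k, and α, β are circles not passing through O that intersect orthogonally, then their images ι(α), ι(β) are circles that intersect orthogonally. -/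
/-!
Let `p = |Oc|² - r²` be the power of `O` with respect to the sphere `s` with center `c` and
radius `r`, and `ι` the inversion in `(O, k)`. For `x ≠ O`, the power of `ι x` with respect to
`s` is `p / |Ox|²` times the power of `x` with respect to the sphere with center
`O + (k² / p) (c - O)` and radius `k² r / |p|`; as `ι` is an involution, this sphere is `ι '' s`.
For two such spheres a direct computation shows that the orthogonality defect
`|c₁c₂|² - r₁² - r₂²` of the images is the defect of the originals times `k⁴ / (p₁ p₂)`, so
orthogonality is preserved.
-/

namespace EuclideanGeometry

variable {V P : Type*} [NormedAddCommGroup V] [InnerProductSpace ℝ V] [MetricSpace P]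
  [NormedAddTorsor V P]

/-- The image of `s` under inversion in the sphere with center `O` and radius `k`, provided
`s.power O ≠ 0`. -/
noncomputable def Sphere.inversion (O : P) (k : ℝ) (s : Sphere P) : Sphere P where
  center := (k ^ 2 / s.power O) • (s.center -ᵥ O) +ᵥ O
  radius := k ^ 2 * s.radius / |s.power O|

def Sphere.IsOrthogonal_s10 (s₁ s₂ : Sphere P) : Prop :=
  s₁.radius ^ 2 + s₂.radius ^ 2 = dist s₁.center s₂.center ^ 2

namespace Sphere

variable (O : P) (k : ℝ) (s : Sphere P)

omit [InnerProductSpace ℝ V] in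
lemma power_eq_norm_vsub_sub_vsub_sq (x : P) :
    s.power x = ‖(x -ᵥ O) - (s.center -ᵥ O)‖ ^ 2 - s.radius ^ 2 := by
  rw [power, vsub_sub_vsub_cancel_right, dist_eq_norm_vsub V]

omit [InnerProductSpace ℝ V] in
lemma power_eq_norm_center_vsub_sq : s.power O = ‖s.center -ᵥ O‖ ^ 2 - s.radius ^ 2 := by
  rw [power_eq_norm_vsub_sub_vsub_sq O, vsub_self, zero_sub, norm_neg]

lemma power_inversion_self : (s.inversion O k).power O = k ^ 4 / s.power O := by
  rw [power_eq_norm_center_vsub_sq, inversion, vadd_vsub, norm_smul, Real.norm_eq_abs, mul_pow, div_pow,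
    sq_abs, div_pow, sq_abs, mul_pow]
  by_cases hp : s.power O = 0
  · simp [hp]
  rw [power_eq_norm_center_vsub_sq] at hp ⊢
  field_simp

lemma power_inversion {x : P} (hx : x ≠ O) (hp : s.power O ≠ 0) :
    s.power (EuclideanGeometry.inversion O k x) =
      s.power O / dist x O ^ 2 * (s.inversion O k).power x := by
  rw [power_eq_norm_vsub_sub_vsub_sq O, inversion_vsub_center,
    power_eq_norm_vsub_sub_vsub_sq O _ x, inversion, vadd_vsub, dist_eq_norm_vsub V]
  rw [power_eq_norm_center_vsub_sq] at hp ⊢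
  have hu : ‖x -ᵥ O‖ ≠ 0 := by simpa using hx
  simp only [norm_sub_sq_real, inner_smul_left, inner_smul_right, norm_smul, Real.norm_eq_abs,
    mul_pow, sq_abs, div_pow, RCLike.conj_to_real, abs_div]
  field_simp
  ring

variable {O k s}

lemma radius_inversion_pos (hk : k ≠ 0) (hr : 0 < s.radius) (hp : s.power O ≠ 0) :
    0 < (s.inversion O k).radius := by
  simp only [inversion]
  positivity

lemma inversion_mem_iff (hk : k ≠ 0) (hr : 0 ≤ s.radius) (hp : s.power O ≠ 0) (x : P) :
    EuclideanGeometry.inversion O k x ∈ s ↔ x ∈ s.inversion O k := by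
  have hr' : 0 ≤ (s.inversion O k).radius := by
    simp only [inversion]
    positivity
  rw [← power_eq_zero_iff_mem_sphere hr, ← power_eq_zero_iff_mem_sphere hr']
  rcases eq_or_ne x O with rfl | hx
  · rw [inversion_self, power_inversion_self]
    simp [hk, hp]
  · rw [power_inversion O k s hx hp]
    simp [hp, dist_ne_zero.mpr hx]

lemma image_inversion (hk : k ≠ 0) (hr : 0 ≤ s.radius) (hp : s.power O ≠ 0) :
    EuclideanGeometry.inversion O k '' s = s.inversion O k := by
  rw [(inversion_involutive O hk).image_eq_preimage_symm]
  ext x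
  exact inversion_mem_iff hk hr hp x

variable (O k) in
lemma dist_center_inversion_sq_sub {s₁ s₂ : Sphere P} (hp₁ : s₁.power O ≠ 0)
    (hp₂ : s₂.power O ≠ 0) :
    dist (s₁.inversion O k).center (s₂.inversion O k).center ^ 2
        - (s₁.inversion O k).radius ^ 2 - (s₂.inversion O k).radius ^ 2
      = k ^ 4 / (s₁.power O * s₂.power O)
          * (dist s₁.center s₂.center ^ 2 - s₁.radius ^ 2 - s₂.radius ^ 2) := by
  rw [dist_eq_norm_vsub V, dist_eq_norm_vsub V, ← vsub_sub_vsub_cancel_right _ _ O,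
    ← vsub_sub_vsub_cancel_right s₁.center _ O]
  simp only [inversion, vadd_vsub]
  simp only [power_eq_norm_center_vsub_sq] at hp₁ hp₂ ⊢
  simp only [norm_sub_sq_real, inner_smul_left, inner_smul_right, norm_smul, Real.norm_eq_abs,
    mul_pow, sq_abs, div_pow, RCLike.conj_to_real]
  field_simp
  ring

lemma IsOrthogonal_s10.inversion {s₁ s₂ : Sphere P} (h : s₁.IsOrthogonal_s10 s₂) (hp₁ : s₁.power O ≠ 0)
    (hp₂ : s₂.power O ≠ 0) : (s₁.inversion O k).IsOrthogonal_s10 (s₂.inversion O k) := by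
  have := dist_center_inversion_sq_sub O k hp₁ hp₂
  unfold IsOrthogonal_s10 at h ⊢
  rw [← h] at this
  linarith

end Sphere

lemma inversion_eq_add_smul (O x : V) (k : ℝ) :
    inversion O k x = O + (k ^ 2 / ‖x - O‖ ^ 2) • (x - O) := by
  rw [inversion, dist_eq_norm, vsub_eq_sub, vadd_eq_add, div_pow, add_comm]

end EuclideanGeometry

open EuclideanGeometry

/-- Inversion preserves orthogonality: if two circles not passing through the
center `O` of inversion are orthogonal, then their images under the inversion
are again circles and are orthogonal. -/
theorem inversion_preserves_orthogonality
    (O : EuclideanSpace ℝ (Fin 2)) (k : ℝ) (hk : 0 < k)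
    (c₁ c₂ : EuclideanSpace ℝ (Fin 2)) (r₁ r₂ : ℝ)
    (hr₁ : 0 < r₁) (hr₂ : 0 < r₂)
    (hO₁ : dist O c₁ ≠ r₁) (hO₂ : dist O c₂ ≠ r₂)
    (horth : r₁ ^ 2 + r₂ ^ 2 = dist c₁ c₂ ^ 2) :
    ∃ (c₁' c₂' : EuclideanSpace ℝ (Fin 2)) (r₁' r₂' : ℝ),
      0 < r₁' ∧ 0 < r₂' ∧
      (fun P => O + (k ^ 2 / ‖P - O‖ ^ 2) • (P - O)) '' Metric.sphere c₁ r₁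
        = Metric.sphere c₁' r₁' ∧
      (fun P => O + (k ^ 2 / ‖P - O‖ ^ 2) • (P - O)) '' Metric.sphere c₂ r₂
        = Metric.sphere c₂' r₂' ∧
      r₁' ^ 2 + r₂' ^ 2 = dist c₁' c₂' ^ 2 := by
  have hι : (fun P => O + (k ^ 2 / ‖P - O‖ ^ 2) • (P - O)) = inversion O k :=
    funext fun x => (inversion_eq_add_smul O x k).symm
  let s₁ : Sphere (EuclideanSpace ℝ (Fin 2)) := ⟨c₁, r₁⟩
  let s₂ : Sphere (EuclideanSpace ℝ (Fin 2)) := ⟨c₂, r₂⟩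
  have hp₁ : s₁.power O ≠ 0 := (Sphere.power_eq_zero_iff_mem_sphere hr₁.le).not.mpr hO₁
  have hp₂ : s₂.power O ≠ 0 := (Sphere.power_eq_zero_iff_mem_sphere hr₂.le).not.mpr hO₂
  rw [hι]
  refine ⟨(s₁.inversion O k).center, (s₂.inversion O k).center, (s₁.inversion O k).radius,
    (s₂.inversion O k).radius, Sphere.radius_inversion_pos hk.ne' hr₁ hp₁,
    Sphere.radius_inversion_pos hk.ne' hr₂ hp₂, ?_, ?_, ?_⟩
  · rw [← Sphere.coe_mk c₁ r₁]
    exact Sphere.image_inversion hk.ne' hr₁.le hp₁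
  · rw [← Sphere.coe_mk c₂ r₂]
    exact Sphere.image_inversion hk.ne' hr₂.le hp₂
  · exact Sphere.IsOrthogonal_s10.inversion horth hp₁ hp₂
end

section
/- Let α be a circle with center c and radius r, and let P be a point inside α other than c. Let X be an intersection point of α with the line through P perpendicular to the line cP. Then the circle β centered at the inverse point P' = c + (r²/‖P−c‖²)(P−c) with radius ‖P' − X‖ is orthogonal to α. -/
/-!
With `P' = c + t (P - c)`, `t = r² / ‖P - c‖²`, perpendicularity of `XP` and `cP` gives
`⟪X - c, P - c⟫ = ‖P - c‖²`, hence `⟪X - c, P' - c⟫ = r² = ‖X - c‖²`. This says that the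
angle `cXP'` is right, and Pythagoras in the triangle `cXP'` is the orthogonality relation.
-/

open RealInnerProductSpace

section InversePoint

variable {V : Type*} [NormedAddCommGroup V] [InnerProductSpace ℝ V]

noncomputable def inversePoint (c : V) (r : ℝ) (P : V) : V :=
  c + (r ^ 2 / ‖P - c‖ ^ 2) • (P - c)

theorem inner_sub_eq_norm_sq_of_inner_eq_zero {c P X : V} (h : ⟪X - P, P - c⟫ = 0) :
    ⟪X - c, P - c⟫ = ‖P - c‖ ^ 2 := by
  rw [← sub_add_sub_cancel X P c, inner_add_left, h, real_inner_self_eq_norm_sq, zero_add]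

theorem inner_inversePoint_sub_eq_sq (c P : V) (r : ℝ) (hPc : P ≠ c) (v : V)
    (hv : ⟪v, P - c⟫ = ‖P - c‖ ^ 2) : ⟪v, inversePoint c r P - c⟫ = r ^ 2 := by
  have hPc' : ‖P - c‖ ^ 2 ≠ 0 := pow_ne_zero 2 (norm_ne_zero_iff.2 (sub_ne_zero.2 hPc))
  rw [inversePoint, add_sub_cancel_left, real_inner_smul_right, hv, div_mul_cancel₀ _ hPc']

theorem norm_sq_add_norm_sq_eq_of_inner_eq_norm_sq {c X Q : V}
    (h : ⟪X - c, Q - c⟫ = ‖X - c‖ ^ 2) : ‖X - c‖ ^ 2 + ‖Q - X‖ ^ 2 = ‖Q - c‖ ^ 2 := by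
  have hright : ⟪X - c, Q - X⟫ = 0 := by
    rw [← sub_sub_sub_cancel_right Q X c, inner_sub_right, h, real_inner_self_eq_norm_sq,
      sub_self]
  have hpyth := norm_add_sq_eq_norm_sq_add_norm_sq_real hright
  rw [add_comm, sub_add_sub_cancel] at hpyth
  simpa only [sq] using hpyth.symm

end InversePoint

theorem inverse_point_orthogonal_circle_general
    (c P X : EuclideanSpace ℝ (Fin 2)) (r : ℝ)
    (hPc : P ≠ c)
    (hX : dist X c = r) (hperp : inner ℝ (X - P) (P - c) = (0 : ℝ)) :
    r ^ 2 + ‖(c + (r ^ 2 / ‖P - c‖ ^ 2) • (P - c)) - X‖ ^ 2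
      = dist c (c + (r ^ 2 / ‖P - c‖ ^ 2) • (P - c)) ^ 2 := by
  have hXc : ‖X - c‖ = r := by rw [← dist_eq_norm, hX]
  have hinv : ⟪X - c, inversePoint c r P - c⟫ = ‖X - c‖ ^ 2 := by
    rw [inner_inversePoint_sub_eq_sq c P r hPc _ (inner_sub_eq_norm_sq_of_inner_eq_zero hperp),
      hXc]
  have hpyth := norm_sq_add_norm_sq_eq_of_inner_eq_norm_sq hinv
  rw [hXc] at hpyth
  rwa [dist_comm, dist_eq_norm]

/-- Construction of the inverse point: for `P` inside circle `(c, r)` with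
`P ≠ c`, and `X` on the circle with `PX ⟂ cP`, the circle centered at the
inverse point `P' = c + (r²/‖P−c‖²)(P−c)` with radius `‖P' − X‖` is orthogonal
to `(c, r)`. -/
theorem inverse_point_orthogonal_circle
    (c P X : EuclideanSpace ℝ (Fin 2)) (r : ℝ) (hr : 0 < r)
    (hPin : dist P c < r) (hPc : P ≠ c)
    (hX : dist X c = r) (hperp : inner ℝ (X - P) (P - c) = (0 : ℝ)) :
    r ^ 2 + ‖(c + (r ^ 2 / ‖P - c‖ ^ 2) • (P - c)) - X‖ ^ 2
      = dist c (c + (r ^ 2 / ‖P - c‖ ^ 2) • (P - c)) ^ 2 :=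
  inverse_point_orthogonal_circle_general c P X r hPc hX hperp
end

section
/- In any finite nonempty family of pairwise non-nested circles in the plane with a relation of orthogonality, the circle of minimum radius is orthogonal to at most 6 other circles of the family. -/
/-!
Let `α` have centre `c` and radius `r`. A circle `(x, a)` orthogonal to `α` has
`‖x - c‖² = r² + a²`. For two such circles `(x, a)`, `(y, b)` that are orthogonal to each other or
disjoint and non-nested (hence `a + b < dist x y`), we get `‖x - y‖² ≥ a² + b²`, i.e.
`⟪x - c, y - c⟫ ≤ r²`; since `a, b ≥ r`, also `‖x - c‖ ‖y - c‖ ≥ 2 r²`. So the centres seen from `c`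
make pairwise angles at least `π / 3`, and at most six directions in the plane can do that.
-/

open scoped Classical

open Metric

theorem sphere_inter_sphere_nonempty_s15 {E : Type*} [NormedAddCommGroup E] [NormedSpace ℝ E]
    (hE : 1 < Module.rank ℝ E) {x y : E} {r s : ℝ}
    (h₁ : dist x y ≤ r + s) (h₂ : r ≤ dist x y + s) (h₃ : s ≤ dist x y + r) :
    (sphere x r ∩ sphere y s).Nonempty := by
  have hr : 0 ≤ r := by linarith
  rcases eq_or_ne x y with rfl | hxy
  · obtain ⟨z, hz⟩ := (isConnected_sphere hE x hr).nonempty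
    refine ⟨z, hz, ?_⟩
    rw [dist_self] at h₂ h₃
    rwa [mem_sphere, show s = r by linarith]
  have hd : 0 < dist x y := dist_pos.mpr hxy
  set near := AffineMap.lineMap x y (r / dist x y)
  set far := AffineMap.lineMap x y (-(r / dist x y))
  have hnear : dist near x = r := by
    rw [dist_lineMap_left, Real.norm_of_nonneg (by positivity), div_mul_cancel₀ _ hd.ne']
  have hfar : dist far x = r := by
    rw [dist_lineMap_left, norm_neg, Real.norm_of_nonneg (by positivity), div_mul_cancel₀ _ hd.ne']
  have hnear_y : dist near y = |dist x y - r| := by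
    rw [dist_lineMap_right, Real.norm_eq_abs, ← abs_of_pos hd, ← abs_mul, abs_of_pos hd]
    congr 1
    field_simp
  have hfar_y : dist far y = dist x y + r := by
    rw [dist_lineMap_right, sub_neg_eq_add, Real.norm_of_nonneg (by positivity), add_mul,
      div_mul_cancel₀ _ hd.ne', one_mul]
  have hs : s ∈ Set.Icc (dist near y) (dist far y) := by
    rw [hnear_y, hfar_y]
    exact ⟨abs_sub_le_iff.mpr ⟨by linarith, by linarith⟩, h₃⟩
  obtain ⟨z, hz, hzs⟩ := (isPreconnected_sphere hE x r).intermediate_value hnear hfar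
    (continuous_id.dist continuous_const).continuousOn hs
  exact ⟨z, hz, hzs⟩

theorem add_lt_dist_of_disjoint_sphere {E : Type*} [NormedAddCommGroup E] [NormedSpace ℝ E]
    (hE : 1 < Module.rank ℝ E) {x y : E} {r s : ℝ}
    (hxy : ¬ closedBall x r ⊆ closedBall y s) (hyx : ¬ closedBall y s ⊆ closedBall x r)
    (hdisj : Disjoint (sphere x r) (sphere y s)) : r + s < dist x y := by
  by_contra! h
  have h₂ : r ≤ dist x y + s := by
    by_contra! h'
    exact hyx (closedBall_subset_closedBall' (by rw [dist_comm]; linarith))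
  have h₃ : s ≤ dist x y + r := by
    by_contra! h'
    exact hxy (closedBall_subset_closedBall' (by linarith))
  exact Set.not_disjoint_iff_nonempty_inter.mpr (sphere_inter_sphere_nonempty_s15 hE h h₂ h₃) hdisj

theorem two_mul_inner_le_norm_mul_norm_of_orthogonal {F : Type*} [NormedAddCommGroup F]
    [InnerProductSpace ℝ F] {c x y : F} {r a b : ℝ} (hr : 0 ≤ r) (ha : r ≤ a) (hb : r ≤ b)
    (hx : r ^ 2 + a ^ 2 = dist c x ^ 2) (hy : r ^ 2 + b ^ 2 = dist c y ^ 2)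
    (hxy : a ^ 2 + b ^ 2 ≤ dist x y ^ 2) :
    2 * inner ℝ (x - c) (y - c) ≤ ‖x - c‖ * ‖y - c‖ := by
  rw [dist_comm, dist_eq_norm] at hx hy
  rw [dist_eq_norm, ← sub_sub_sub_cancel_right x y c, norm_sub_sq_real] at hxy
  have hinner : inner ℝ (x - c) (y - c) ≤ r ^ 2 := by linarith
  have hprod : 2 * r ^ 2 ≤ ‖x - c‖ * ‖y - c‖ := by
    have hx' : 2 * r ^ 2 ≤ ‖x - c‖ ^ 2 := by nlinarith
    have hy' : 2 * r ^ 2 ≤ ‖y - c‖ ^ 2 := by nlinarith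
    nlinarith [norm_nonneg (x - c), norm_nonneg (y - c),
      mul_nonneg (norm_nonneg (x - c)) (norm_nonneg (y - c))]
  linarith

theorem Complex.norm_mul_norm_mul_cos_arg_sub (z w : ℂ) :
    ‖z‖ * ‖w‖ * Real.cos (z.arg - w.arg) = inner ℝ z w := by
  rw [Real.cos_sub, Complex.inner]
  simp only [Complex.mul_re, Complex.conj_re, Complex.conj_im]
  linear_combination (‖w‖ * Real.cos w.arg) * Complex.norm_mul_cos_arg z +
    z.re * Complex.norm_mul_cos_arg w + (‖w‖ * Real.sin w.arg) * Complex.norm_mul_sin_arg z +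
    z.im * Complex.norm_mul_sin_arg w

open Real in
theorem Complex.norm_mul_norm_lt_two_mul_inner_of_abs_arg_sub_lt {z w : ℂ} (hz : z ≠ 0)
    (hw : w ≠ 0) (h : |z.arg - w.arg| < π / 3) : ‖z‖ * ‖w‖ < 2 * inner ℝ z w := by
  rw [← Complex.norm_mul_norm_mul_cos_arg_sub]
  have hcos : 1 / 2 < Real.cos (z.arg - w.arg) := by
    rw [← cos_pi_div_three, ← Real.cos_abs (z.arg - w.arg)]
    exact Real.cos_lt_cos_of_nonneg_of_le_pi (abs_nonneg _) (by linarith [pi_pos]) h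
  have : 0 < ‖z‖ * ‖w‖ := by positivity
  nlinarith

open Real in
theorem Complex.card_le_six_of_two_mul_inner_le {ι : Type*} (S : Finset ι) (u : ι → ℂ)
    (hu : ∀ i ∈ S, u i ≠ 0)
    (h : ∀ i ∈ S, ∀ j ∈ S, i ≠ j → 2 * inner ℝ (u i) (u j) ≤ ‖u i‖ * ‖u j‖) : S.card ≤ 6 := by
  -- `arg` takes values in `(-π, π]`, cut into six half-open sectors of opening `π / 3`
  let sector : ι → ℤ := fun i => ⌊(π - (u i).arg) / (π / 3)⌋
  have hmaps : ∀ i ∈ S, sector i ∈ Finset.Ico 0 6 := by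
    intro i _
    have := Complex.neg_pi_lt_arg (u i)
    have := Complex.arg_le_pi (u i)
    simp only [Finset.mem_Ico, sector, Int.floor_nonneg, Int.floor_lt,
      le_div_iff₀ (by positivity : 0 < π / 3), div_lt_iff₀ (by positivity : 0 < π / 3)]
    constructor <;> push_cast <;> linarith
  have hinj : Set.InjOn sector S := by
    intro i hi j hj hij
    by_contra hne
    have hclose := Int.abs_sub_lt_one_of_floor_eq_floor hij
    rw [← sub_div, sub_sub_sub_cancel_left, abs_div, abs_of_pos (by positivity : 0 < π / 3),
      div_lt_one (by positivity), abs_sub_comm] at hclose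
    exact (h i hi j hj hne).not_gt
      (Complex.norm_mul_norm_lt_two_mul_inner_of_abs_arg_sub_lt (hu i hi) (hu j hj) hclose)
  simpa using Finset.card_le_card_of_injOn sector hmaps hinj

theorem card_le_six_of_two_mul_inner_le {F : Type*} [NormedAddCommGroup F]
    [InnerProductSpace ℝ F] [Fact (Module.finrank ℝ F = 2)] {ι : Type*} (S : Finset ι) (u : ι → F)
    (hu : ∀ i ∈ S, u i ≠ 0)
    (h : ∀ i ∈ S, ∀ j ∈ S, i ≠ j → 2 * inner ℝ (u i) (u j) ≤ ‖u i‖ * ‖u j‖) : S.card ≤ 6 := by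
  have : FiniteDimensional ℝ F := .of_fact_finrank_eq_two
  let e := (Complex.isometryOfOrthonormal
    ((stdOrthonormalBasis ℝ F).reindex (finCongr Fact.out))).symm
  refine Complex.card_le_six_of_two_mul_inner_le S (e ∘ u) (by simpa using hu) ?_
  intro i hi j hj hij
  simpa [LinearIsometryEquiv.inner_map_map] using h i hi j hj hij

/-- In a finite nonempty family of pairwise non-nested circles that pairwise
are either disjoint or orthogonal, a circle of minimum radius is orthogonal to
at most 6 other circles of the family. -/
theorem min_radius_circle_few_orthogonal_neighbours
    (A : Finset (EuclideanSpace ℝ (Fin 2) × ℝ))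
    (hpos : ∀ p ∈ A, 0 < p.2)
    (hnonnested : ∀ p ∈ A, ∀ q ∈ A, p ≠ q →
      ¬ Metric.closedBall p.1 p.2 ⊆ Metric.closedBall q.1 q.2)
    (harr : ∀ p ∈ A, ∀ q ∈ A, p ≠ q →
      Disjoint (Metric.sphere p.1 p.2) (Metric.sphere q.1 q.2) ∨
      p.2 ^ 2 + q.2 ^ 2 = dist p.1 q.1 ^ 2)
    (α : EuclideanSpace ℝ (Fin 2) × ℝ) (hα : α ∈ A)
    (hmin : ∀ p ∈ A, α.2 ≤ p.2) :
    (A.filter fun p => p ≠ α ∧ α.2 ^ 2 + p.2 ^ 2 = dist α.1 p.1 ^ 2).card ≤ 6 := by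
  have hdim : Fact (Module.finrank ℝ (EuclideanSpace ℝ (Fin 2)) = 2) :=
    ⟨finrank_euclideanSpace_fin⟩
  have hrank : 1 < Module.rank ℝ (EuclideanSpace ℝ (Fin 2)) := by
    rw [← Module.finrank_eq_rank, hdim.out]
    norm_num
  refine card_le_six_of_two_mul_inner_le _ (fun p => p.1 - α.1) ?_ ?_
  · intro p hp hcentre
    rw [Finset.mem_filter, sub_eq_zero.mp hcentre, dist_self] at hp
    nlinarith [hpos p hp.1, hp.2.2]
  · intro p hp q hq hpq
    rw [Finset.mem_filter] at hp hq
    have hfar : p.2 ^ 2 + q.2 ^ 2 ≤ dist p.1 q.1 ^ 2 := by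
      rcases harr p hp.1 q hq.1 hpq with hdisj | horth
      · have := add_lt_dist_of_disjoint_sphere hrank (hnonnested p hp.1 q hq.1 hpq)
          (hnonnested q hq.1 p hp.1 hpq.symm) hdisj
        nlinarith [hpos p hp.1, hpos q hq.1]
      · exact horth.le
    exact two_mul_inner_le_norm_mul_norm_of_orthogonal (hpos α hα).le (hmin p hp.1) (hmin q hq.1)
      hp.2.2 hq.2.2 hfar
end

section
/- In any finite family of unit circles in the plane that are pairwise either disjoint or orthogonal, each circle is orthogonal to at most 6 others; that is, a unit circle cannot be orthogonal to 7 unit circles that are pairwise non-intersecting or orthogonal. -/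
open Real


lemma dist_sq_two (x y : EuclideanSpace ℝ (Fin 2)) :
    dist x y ^ 2 = (x 0 - y 0)^2 + (x 1 - y 1)^2 := by
  rw [EuclideanSpace.dist_eq, Real.sq_sqrt (by positivity)]
  simp [Fin.sum_univ_two, Real.dist_eq, sq_abs]

lemma dist_eq_one_of_sq (x y : EuclideanSpace ℝ (Fin 2)) (h : dist x y ^ 2 = 1) :
    dist x y = 1 := by
  nlinarith [dist_nonneg (x := x) (y := y)]

/-- Two unit circles whose centers are at distance ≤ 2 intersect. -/
lemma spheres_meet (p q : EuclideanSpace ℝ (Fin 2)) (h : dist p q ≤ 2) :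
    ¬ Disjoint (Metric.sphere p (1:ℝ)) (Metric.sphere q (1:ℝ)) := by
  rw [Set.not_disjoint_iff]
  have hd0 : (0:ℝ) ≤ dist p q := dist_nonneg
  by_cases hz : dist p q = 0
  · have hpq : p = q := by rwa [← dist_eq_zero]
    subst hpq
    set x : EuclideanSpace ℝ (Fin 2) := !₂[p 0 + 1, p 1] with hx
    have h1 : dist x p = 1 := by
      apply dist_eq_one_of_sq
      rw [dist_sq_two]
      norm_num [hx]
    exact ⟨x, h1, h1⟩
  · have hdpos : 0 < dist p q := lt_of_le_of_ne hd0 (Ne.symm hz)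
    have hd2 : dist p q ^ 2 = (q 0 - p 0)^2 + (q 1 - p 1)^2 := by
      rw [dist_comm, dist_sq_two]
    set s : ℝ := Real.sqrt (1 - dist p q ^2/4) / dist p q with hs
    have h4 : 0 ≤ 1 - dist p q^2/4 := by nlinarith
    have hss : s^2 * dist p q^2 = 1 - dist p q^2/4 := by
      rw [hs, div_pow, div_mul_cancel₀]
      · exact Real.sq_sqrt h4
      · positivity
    set x : EuclideanSpace ℝ (Fin 2) :=
      !₂[(p 0 + q 0)/2 + s * (p 1 - q 1), (p 1 + q 1)/2 + s * (q 0 - p 0)] with hx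
    have hx0 : x 0 = (p 0 + q 0)/2 + s * (p 1 - q 1) := rfl
    have hx1 : x 1 = (p 1 + q 1)/2 + s * (q 0 - p 0) := rfl
    have h1 : dist x p = 1 := by
      apply dist_eq_one_of_sq
      rw [dist_sq_two, hx0, hx1]
      nlinarith [hss, hd2]
    have h2 : dist x q = 1 := by
      apply dist_eq_one_of_sq
      rw [dist_sq_two, hx0, hx1]
      nlinarith [hss, hd2]
    exact ⟨x, h1, h2⟩

/-- A unit circle cannot be orthogonal to 7 unit circles that are pairwise
either disjoint or orthogonal. -/
theorem no_seven_unit_neighbours :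
    ¬ ∃ (cα : EuclideanSpace ℝ (Fin 2)) (c : Fin 7 → EuclideanSpace ℝ (Fin 2)),
      (∀ i, dist (c i) cα ^ 2 = 2) ∧
      (∀ i j, i ≠ j →
        Disjoint (Metric.sphere (c i) (1 : ℝ)) (Metric.sphere (c j) (1 : ℝ)) ∨
        dist (c i) (c j) ^ 2 = 2) := by
  rintro ⟨cα, c, hα, hpair⟩
  set z : Fin 7 → ℂ := fun i => ⟨c i 0 - cα 0, c i 1 - cα 1⟩ with hz
  have hcoord : ∀ i, (c i 0 - cα 0)^2 + (c i 1 - cα 1)^2 = 2 := by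
    intro i; have := hα i; rwa [dist_sq_two] at this
  have habs : ∀ i, ‖z i‖ = Real.sqrt 2 := by
    intro i
    rw [Complex.norm_def, Complex.normSq_mk]
    congr 1
    have := hcoord i; ring_nf; ring_nf at this; linarith
  have hne : ∀ i, z i ≠ 0 := by
    intro i h
    have := habs i
    rw [h, norm_zero] at this
    have : (0:ℝ) < Real.sqrt 2 := Real.sqrt_pos.mpr (by norm_num)
    linarith [habs i, (norm_zero : ‖(0:ℂ)‖ = 0).symm]
  -- coordinates via arg
  have hre : ∀ i, c i 0 - cα 0 = Real.sqrt 2 * Real.cos (z i).arg := by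
    intro i
    have := Complex.cos_arg (hne i)
    rw [habs i] at this
    have h2 : (0:ℝ) < Real.sqrt 2 := Real.sqrt_pos.mpr (by norm_num)
    field_simp at this
    simpa [hz, mul_comm] using this.symm
  have him : ∀ i, c i 1 - cα 1 = Real.sqrt 2 * Real.sin (z i).arg := by
    intro i
    have := Complex.sin_arg (z i)
    rw [habs i] at this
    have h2 : (0:ℝ) < Real.sqrt 2 := Real.sqrt_pos.mpr (by norm_num)
    field_simp at this
    simpa [hz, mul_comm] using this.symm
  -- pigeonhole on angles
  have hpig : ∃ i j, i ≠ j ∧ |(z i).arg - (z j).arg| < π/3 := by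
    have hcard : (Finset.Ico (0:ℤ) 6).card < (Finset.univ : Finset (Fin 7)).card := by simp
    have hmaps : ∀ i ∈ (Finset.univ : Finset (Fin 7)),
        (⌊(π - (z i).arg) * 3 / π⌋ : ℤ) ∈ Finset.Ico (0:ℤ) 6 := by
      intro i _
      have hpi : 0 < π := Real.pi_pos
      have h1 : (z i).arg ≤ π := Complex.arg_le_pi _
      have h2 : -π < (z i).arg := Complex.neg_pi_lt_arg _
      rw [Finset.mem_Ico]
      constructor
      · apply Int.le_floor.mpr
        push_cast
        apply div_nonneg (by nlinarith) (le_of_lt hpi)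
      · apply Int.floor_lt.mpr
        push_cast
        rw [div_lt_iff₀ hpi]
        nlinarith
    obtain ⟨i, _, j, _, hij, hfij⟩ :=
      Finset.exists_ne_map_eq_of_card_lt_of_maps_to hcard hmaps
    refine ⟨i, j, hij, ?_⟩
    have hpi : 0 < π := Real.pi_pos
    have := Int.abs_sub_lt_one_of_floor_eq_floor hfij
    have heq : (π - (z i).arg) * 3 / π - (π - (z j).arg) * 3 / π
        = ((z j).arg - (z i).arg) * 3 / π := by ring
    rw [heq, abs_div, abs_of_pos hpi, div_lt_one hpi, abs_mul] at this
    norm_num at this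
    rw [abs_sub_comm]
    linarith
  obtain ⟨i, j, hij, hang⟩ := hpig
  -- inner product bound
  have hcos : Real.cos ((z i).arg - (z j).arg) > 1/2 := by
    have h1 : Real.cos (π/3) < Real.cos |(z i).arg - (z j).arg| :=
      Real.cos_lt_cos_of_nonneg_of_le_pi (abs_nonneg _)
        (by linarith [Real.pi_pos]) hang
    rw [Real.cos_abs, Real.cos_pi_div_three] at h1
    linarith
  have hinner : (c i 0 - cα 0) * (c j 0 - cα 0) + (c i 1 - cα 1) * (c j 1 - cα 1) > 1 := by
    rw [hre i, hre j, him i, him j]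
    have hs2 : Real.sqrt 2 * Real.sqrt 2 = 2 := Real.mul_self_sqrt (by norm_num)
    have hcs := Real.cos_sub (z i).arg (z j).arg
    nlinarith [hcos]
  have hdlt : dist (c i) (c j) ^ 2 < 2 := by
    rw [dist_sq_two]
    have h1 := hcoord i
    have h2 := hcoord j
    nlinarith [hinner]
  rcases hpair i j hij with hdisj | heq2
  · have hle : dist (c i) (c j) ≤ 2 := by
      nlinarith [dist_nonneg (x := c i) (y := c j)]
    -- spheres intersect, contradiction
    have hd0 : (0:ℝ) ≤ dist (c i) (c j) := dist_nonneg
    exact spheres_meet (c i) (c j) hle hdisj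
  · linarith
end
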